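/- arXiv:1906.04817 — 3 statements merged into one kernel-verified Lean document; each statement's English description precedes it below -/
import Mathlib

section
/- Fix a real number p ≥ 1. There exist absolute constants c > 0 and C > 0 such that for every finite metric space (V, d) with |V| = n ≥ 2, there exist a natural number k ≤ c · (log n)^2 and a map f : V → ℝ^k such that for all u, v ∈ V, (1 / (C · log n)) · d(u, v) ≤ ‖f(u) − f(v)‖_p ≤ d(u, v); that is, (V, d) embeds into ℝ^k with the ℓ_p metric with distortion O(log n) in dimension O(log² n). -/
/-!
For each scale `t < L = ⌈log₂ n⌉` take `m = ⌈72 log n⌉` subsets `A` of `V` and use the coordinates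
`z ↦ d(z, A)`, scaled by `(L m)^(-1/p)`. They are `1`-Lipschitz, which gives the upper bound.

For a pair `u, v` let `ρ_t` be the least radius at which the closed balls around `u` and `v` both
contain `2 ^ t` points, capped at `d(u, v) / 4`, so that `ρ_0 = 0` and `ρ_L = d(u, v) / 4`. If
`ρ_t < ρ_{t+1}`, the open ball of radius `ρ_{t+1}` around one of the two points has fewer than
`2 ^ (t+1)` points while the closed ball of radius `ρ_t` around the other has at least `2 ^ t`; a
random set of density `2 ^ (-(t+1))` misses the first and meets the second with probability at
least `1 / 9`, and then `|d(u, A) - d(v, A)| ≥ ρ_{t+1} - ρ_t`. A Chernoff bound, derandomized by a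
pessimistic estimator, yields sets for which this happens for at least `m / 36` of the `m` sets of
every scale, for all pairs at once. As the gaps `ρ_{t+1} - ρ_t` add up to `d(u, v) / 4`, the power
mean inequality gives the lower bound `d(u, v) / (144 L)`.
-/

open Finset Real Metric

lemma exp_neg_one_le_one_sub_inv_pow {N : ℕ} (hN : 0 < N) :
    exp (-1) ≤ (1 - (N : ℝ)⁻¹) ^ (N - 1) := by
  obtain ⟨n, rfl⟩ := Nat.exists_eq_add_of_lt hN
  rw [zero_add, Nat.add_sub_cancel, exp_neg]
  have hprod : (1 - ((n + 1 : ℕ) : ℝ)⁻¹) ^ n * (1 + (n : ℝ)⁻¹) ^ n = 1 := by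
    rcases n.eq_zero_or_pos with rfl | hn
    · simp
    have : (n : ℝ) ≠ 0 := by positivity
    rw [← mul_pow, ← one_pow n]
    congr 1
    push_cast
    field_simp
    ring
  calc (exp 1)⁻¹ ≤ ((1 + (n : ℝ)⁻¹) ^ n)⁻¹ := inv_anti₀ (by positivity) one_add_inv_pow_le_exp
    _ = _ := by rw [inv_eq_of_mul_eq_one_left hprod]

lemma card_filter_mul_rpow_le_sum_rpow {κ : Type*} [Fintype κ] (a : κ → ℝ) {Δ p : ℝ}
    (hΔ : 0 ≤ Δ) (hp : 0 ≤ p) : #{j | Δ ≤ |a j|} * Δ ^ p ≤ ∑ j, |a j| ^ p :=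
  calc #{j | Δ ≤ |a j|} * Δ ^ p = ∑ j with Δ ≤ |a j|, Δ ^ p := by rw [sum_const, nsmul_eq_mul]
    _ ≤ ∑ j with Δ ≤ |a j|, |a j| ^ p :=
        sum_le_sum fun j hj ↦ rpow_le_rpow hΔ (mem_filter.mp hj).2 hp
    _ ≤ ∑ j, |a j| ^ p :=
        sum_le_sum_of_subset_of_nonneg (filter_subset _ _) fun j _ _ ↦ by positivity

lemma rpow_mul_sum_div_card_le {ι κ : Type*} [Fintype ι] [Fintype κ] [Nonempty ι] [Nonempty κ]
    (a : ι → κ → ℝ) {Δ : ι → ℝ} {c p : ℝ} (hp : 1 ≤ p) (hc₀ : 0 ≤ c) (hc₁ : c ≤ 1)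
    (hΔ : ∀ t, 0 ≤ Δ t) (hcard : ∀ t, c * Fintype.card κ ≤ #{j | Δ t ≤ |a t j|}) :
    (c * (∑ t, Δ t) / Fintype.card ι) ^ p ≤
      (∑ t, ∑ j, |a t j| ^ p) / (Fintype.card ι * Fintype.card κ) := by
  set L : ℝ := (Fintype.card ι : ℝ)
  set m : ℝ := (Fintype.card κ : ℝ)
  have hL : 0 < L := Nat.cast_pos.mpr Fintype.card_pos
  have hm : 0 < m := Nat.cast_pos.mpr Fintype.card_pos
  have hsum : 0 ≤ ∑ t, Δ t := sum_nonneg fun t _ ↦ hΔ t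
  have hrows : c * m * (∑ t, Δ t) ^ p ≤ L ^ (p - 1) * ∑ t, ∑ j, |a t j| ^ p :=
    calc c * m * (∑ t, Δ t) ^ p ≤ c * m * (L ^ (p - 1) * ∑ t, Δ t ^ p) := by
          gcongr
          exact rpow_sum_le_const_mul_sum_rpow_of_nonneg univ hp fun t _ ↦ hΔ t
      _ = L ^ (p - 1) * ∑ t, c * m * Δ t ^ p := by rw [mul_left_comm, mul_sum]
      _ ≤ L ^ (p - 1) * ∑ t, ∑ j, |a t j| ^ p := by
          gcongr with t
          exact (mul_le_mul_of_nonneg_right (hcard t) (rpow_nonneg (hΔ t) p)).trans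
            (card_filter_mul_rpow_le_sum_rpow _ (hΔ t) (by linarith))
  have hcp : c ^ p ≤ c := by simpa using rpow_le_rpow_of_exponent_ge' hc₀ hc₁ zero_le_one hp
  have hLp : L ^ p = L ^ (p - 1) * L := by rw [rpow_sub_one hL.ne', div_mul_cancel₀ _ hL.ne']
  calc (c * (∑ t, Δ t) / L) ^ p = c ^ p * (∑ t, Δ t) ^ p / L ^ p := by
        rw [div_rpow (by positivity) hL.le, mul_rpow hc₀ hsum]
    _ ≤ c * (∑ t, Δ t) ^ p / L ^ p := by gcongr
    _ = c * m * (∑ t, Δ t) ^ p / (L ^ (p - 1) * (L * m)) := by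
        rw [hLp]
        field_simp
    _ ≤ (∑ t, ∑ j, |a t j| ^ p) / (L * m) := by
        rw [div_le_div_iff₀ (by positivity) (by positivity)]
        nlinarith [mul_le_mul_of_nonneg_right hrows (by positivity : (0 : ℝ) ≤ L * m)]

lemma sum_abs_mul_sub_mul_rpow {ι : Type*} [Fintype ι] {σ : ℝ} (hσ : 0 ≤ σ) (p : ℝ)
    (a b : ι → ℝ) : ∑ i, |σ * a i - σ * b i| ^ p = σ ^ p * ∑ i, |a i - b i| ^ p := by
  rw [mul_sum]
  refine sum_congr rfl fun i _ ↦ ?_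
  rw [← mul_sub, abs_mul, abs_of_nonneg hσ, mul_rpow hσ (abs_nonneg _)]

lemma clog_two_le_three_mul_log {n : ℕ} (hn : 2 ≤ n) : (Nat.clog 2 n : ℝ) ≤ 3 * log n := by
  have hlog : log 2 ≤ log n := log_le_log two_pos (by exact_mod_cast hn)
  have hlog2 := log_two_gt_d9
  have hceil := Nat.ceil_lt_add_one
    (logb_nonneg one_lt_two (x := n) (by exact_mod_cast one_le_two.trans hn))
  rw [← Nat.cast_ofNat, natCeil_logb_natCast, Nat.cast_ofNat, logb] at hceil
  have hlt : (Nat.clog 2 n : ℝ) * log 2 < log n + log 2 := by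
    rwa [div_add_one (by positivity), lt_div_iff₀ (by positivity)] at hceil
  nlinarith

section FiniteProbability

variable {Ω : Type*} [Fintype Ω] {w : Ω → ℝ}

lemma exists_le_sum_mul (hw₀ : ∀ ω, 0 ≤ w ω) (hw₁ : ∑ ω, w ω = 1) (F : Ω → ℝ) :
    ∃ ω, F ω ≤ ∑ ω, w ω * F ω := by
  by_contra! hF
  obtain ⟨ω₀, -, hω₀⟩ : ∃ ω ∈ univ, (0 : ℝ) < w ω :=
    exists_lt_of_sum_lt (by simp [hw₁])
  have hlt : ∑ ω, w ω * (∑ ω, w ω * F ω) < ∑ ω, w ω * F ω :=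
    sum_lt_sum (fun ω _ ↦ mul_le_mul_of_nonneg_left (hF ω).le (hw₀ ω))
      ⟨ω₀, mem_univ _, mul_lt_mul_of_pos_left (hF ω₀) hω₀⟩
  rw [← sum_mul, hw₁, one_mul] at hlt
  exact lt_irrefl _ hlt

lemma sum_filter_le_sum_filter_of_imp (hw₀ : ∀ ω, 0 ≤ w ω) {P Q : Ω → Prop} [DecidablePred P]
    [DecidablePred Q] (h : ∀ ω, P ω → Q ω) : ∑ ω with P ω, w ω ≤ ∑ ω with Q ω, w ω :=
  sum_le_sum_of_subset_of_nonneg (monotone_filter_right _ fun ω _ ↦ h ω) fun ω _ _ ↦ hw₀ ω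

lemma sum_mul_ite_exp_neg_one_le (hw₀ : ∀ ω, 0 ≤ w ω) (hw₁ : ∑ ω, w ω = 1) {P : Ω → Prop}
    [DecidablePred P] {δ : ℝ} (hP : δ ≤ ∑ ω with P ω, w ω) :
    ∑ ω, w ω * (if P ω then exp (-1) else 1) ≤ exp (-(δ / 2)) := by
  have hsplit : ∑ ω, w ω * (if P ω then exp (-1) else 1) =
      1 - (1 - exp (-1)) * ∑ ω with P ω, w ω := by
    simp only [mul_ite, mul_one, sum_ite, ← sum_mul]
    linear_combination sum_filter_add_sum_filter_not univ P w + hw₁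
  have hP₀ : 0 ≤ ∑ ω with P ω, w ω := sum_nonneg fun ω _ ↦ hw₀ ω
  nlinarith [exp_neg_one_lt_half, add_one_le_exp (-(δ / 2))]

/-- Derandomized Chernoff bound: `G` is found by comparing with the expectation of the pessimistic
estimator `∑ i, exp (-#{j | E i (G j)})` over `m` independent samples of `w`. -/
theorem exists_forall_le_card_filter (hw₀ : ∀ ω, 0 ≤ w ω) (hw₁ : ∑ ω, w ω = 1)
    {ι : Type*} [Fintype ι] (E : ι → Ω → Prop) [∀ i, DecidablePred (E i)] {δ : ℝ}
    (hE : ∀ i, δ ≤ ∑ ω with E i ω, w ω) (m : ℕ) :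
    ∃ G : Fin m → Ω, ∀ i, m * δ / 2 - log (Fintype.card ι) ≤ #{j | E i (G j)} := by
  set b := exp (-1)
  have hpow (i : ι) (G : Fin m → Ω) :
      b ^ #{j | E i (G j)} = ∏ j, if E i (G j) then b else 1 := by
    rw [prod_ite, prod_const_one, mul_one, prod_const]
  obtain ⟨G, hG⟩ := exists_le_sum_mul (w := fun G : Fin m → Ω ↦ ∏ j, w (G j))
    (fun G ↦ prod_nonneg fun j _ ↦ hw₀ (G j)) (by rw [← Fintype.sum_pow, hw₁, one_pow])
    (fun G ↦ ∑ i, b ^ #{j | E i (G j)})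
  refine ⟨G, fun i ↦ ?_⟩
  have hbound : b ^ #{j | E i (G j)} ≤ Fintype.card ι * exp (-(m * δ / 2)) := by
    calc b ^ #{j | E i (G j)} ≤ ∑ i, b ^ #{j | E i (G j)} :=
          single_le_sum (f := fun i ↦ b ^ #{j | E i (G j)}) (fun i _ ↦ by positivity) (mem_univ i)
      _ ≤ ∑ G : Fin m → Ω, (∏ j, w (G j)) * ∑ i, b ^ #{j | E i (G j)} := hG
      _ = ∑ i, (∑ ω, w ω * (if E i ω then b else 1)) ^ m := by
          simp only [mul_sum, Fintype.sum_pow]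
          rw [sum_comm]
          refine sum_congr rfl fun i _ ↦ sum_congr rfl fun G _ ↦ ?_
          rw [hpow, ← prod_mul_distrib]
      _ ≤ ∑ _i : ι, exp (-(δ / 2)) ^ m :=
          sum_le_sum fun i _ ↦ pow_le_pow_left₀
            (sum_nonneg fun ω _ ↦ mul_nonneg (hw₀ ω) (by positivity))
            (sum_mul_ite_exp_neg_one_le hw₀ hw₁ (hE i)) m
      _ = Fintype.card ι * exp (-(m * δ / 2)) := by
          rw [sum_const, card_univ, nsmul_eq_mul, ← exp_nat_mul]
          ring_nf
  have hcard : (0 : ℝ) < Fintype.card ι := by exact_mod_cast Fintype.card_pos_iff.mpr ⟨i⟩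
  have := log_le_log (by positivity) hbound
  rw [← exp_nat_mul, log_exp, log_mul hcard.ne' (exp_pos _).ne', log_exp] at this
  linarith

end FiniteProbability

section RandomSubset

variable {V : Type*} [Fintype V] [DecidableEq V]

/-- The probability of the subset `A` when every point is put into it independently with
probability `q`. -/
def bernoulliWeight (q : ℝ) (A : Finset V) : ℝ := q ^ #A * (1 - q) ^ #Aᶜ

lemma bernoulliWeight_nonneg {q : ℝ} (hq₀ : 0 ≤ q) (hq₁ : q ≤ 1) (A : Finset V) :
    0 ≤ bernoulliWeight q A :=
  mul_nonneg (pow_nonneg hq₀ _) (pow_nonneg (sub_nonneg.mpr hq₁) _)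

lemma sum_bernoulliWeight_disjoint (q : ℝ) (S : Finset V) :
    ∑ A with Disjoint A S, bernoulliWeight q A = (1 - q) ^ #S := by
  have h := Fintype.prod_add (fun v ↦ if v ∉ S then q else 0) (fun _ ↦ 1 - q)
  simp only [prod_ite_zero, prod_const, ← disjoint_left, ite_mul, zero_mul] at h
  rw [sum_filter]
  simp only [bernoulliWeight]
  rw [← h]
  calc ∏ v, ((if v ∉ S then q else 0) + (1 - q)) = ∏ v, if v ∈ S then 1 - q else 1 :=
        prod_congr rfl fun v _ ↦ by split_ifs <;> ring
    _ = (1 - q) ^ #S := by rw [prod_ite_mem, univ_inter, prod_const]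

lemma bernoulliWeight_inv_two_pow_nonneg (k : ℕ) (A : Finset V) :
    0 ≤ bernoulliWeight (2 ^ k)⁻¹ A :=
  bernoulliWeight_nonneg (by positivity) (inv_le_one_of_one_le₀ (one_le_pow₀ one_le_two)) A

lemma sum_bernoulliWeight (q : ℝ) : ∑ A : Finset V, bernoulliWeight q A = 1 := by
  simpa using sum_bernoulliWeight_disjoint q ∅

lemma sum_bernoulliWeight_disjoint_not_disjoint (q : ℝ) {S₁ S₂ : Finset V}
    (h : Disjoint S₁ S₂) :
    ∑ A with Disjoint A S₁ ∧ ¬Disjoint A S₂, bernoulliWeight q A =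
      (1 - q) ^ #S₁ * (1 - (1 - q) ^ #S₂) := by
  have hsplit := sum_filter_add_sum_filter_not {A | Disjoint A S₁} (Disjoint · S₂)
    (bernoulliWeight q)
  simp only [filter_filter, ← disjoint_union_right, sum_bernoulliWeight_disjoint,
    card_union_of_disjoint h] at hsplit
  rw [pow_add] at hsplit
  linear_combination hsplit

lemma one_ninth_le_sum_bernoulliWeight (t : ℕ) {S₁ S₂ : Finset V} (h : Disjoint S₁ S₂)
    (h₁ : #S₁ < 2 ^ (t + 1)) (h₂ : 2 ^ t ≤ #S₂) :
    1 / 9 ≤ ∑ A with Disjoint A S₁ ∧ ¬Disjoint A S₂, bernoulliWeight (2 ^ (t + 1))⁻¹ A := by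
  rw [sum_bernoulliWeight_disjoint_not_disjoint _ h]
  set q : ℝ := (2 ^ (t + 1))⁻¹
  have hq₀ : 0 ≤ 1 - q := sub_nonneg.mpr (inv_le_one_of_one_le₀ (one_le_pow₀ one_le_two))
  have hq₁ : 1 - q ≤ 1 := sub_le_self _ (by positivity)
  have hmiss : 1 / 3 ≤ (1 - q) ^ #S₁ := by
    calc (1 : ℝ) / 3 ≤ exp (-1) := by linarith [exp_neg_one_gt_d9]
      _ ≤ (1 - q) ^ (2 ^ (t + 1) - 1) := by
          simpa [q] using exp_neg_one_le_one_sub_inv_pow (N := 2 ^ (t + 1)) (by positivity)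
      _ ≤ (1 - q) ^ #S₁ := pow_le_pow_of_le_one hq₀ hq₁ (Nat.le_sub_one_of_lt h₁)
  have hhit : (1 - q) ^ #S₂ ≤ 2 / 3 := by
    calc (1 - q) ^ #S₂ ≤ (1 - q) ^ 2 ^ t := pow_le_pow_of_le_one hq₀ hq₁ h₂
      _ = (1 - (1 / 2) / ((2 ^ t : ℕ) : ℝ)) ^ 2 ^ t := by
          simp only [q, pow_succ]; push_cast; ring_nf
      _ ≤ exp (-(1 / 2)) := by
          refine one_sub_div_pow_le_exp_neg ?_
          push_cast
          linarith [one_le_pow₀ (n := t) (one_le_two : (1 : ℝ) ≤ 2)]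
      _ ≤ 2 / 3 := by
          rw [exp_neg, inv_le_comm₀ (exp_pos _) (by norm_num)]
          linarith [add_one_le_exp (1 / 2 : ℝ)]
  nlinarith

end RandomSubset

lemma sub_le_infDist_sub_infDist {X : Type*} [PseudoMetricSpace X] {x y w : X} {s₀ s₁ : ℝ}
    {A : Set X} (hx : ∀ z ∈ A, s₁ ≤ dist x z) (hw : w ∈ A) (hy : dist y w ≤ s₀) :
    s₁ - s₀ ≤ infDist x A - infDist y A := by
  have h₁ : s₁ ≤ infDist x A := (le_infDist ⟨w, hw⟩).mpr hx
  have h₀ : infDist y A ≤ s₀ := (infDist_le_dist_of_mem hw).trans hy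
  linarith

lemma abs_infDist_sub_infDist_le {X : Type*} [PseudoMetricSpace X] (A : Set X) (x y : X) :
    |infDist x A - infDist y A| ≤ dist x y := by
  simpa [Real.dist_eq] using (lipschitz_infDist_pt (s := A)).dist_le_mul x y

section BourgainRadius

variable {V : Type*} [MetricSpace V] [Fintype V]

variable (V) in
noncomputable def pairDists : Finset ℝ := univ.image fun x : V × V ↦ dist x.1 x.2

lemma dist_mem_pairDists (u v : V) : dist u v ∈ pairDists V :=
  mem_image_of_mem _ (mem_univ (u, v))

/-- The radius `ρ_t` of the proof sketch; only distances occurring in `V` need to be tried. -/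
noncomputable def bourgainRadius (u v : V) (t : ℕ) : ℝ :=
  (insert (dist u v / 4) {ρ ∈ pairDists V |
    2 ^ t ≤ #{w | dist u w ≤ ρ} ∧ 2 ^ t ≤ #{w | dist v w ≤ ρ}}).min' (insert_nonempty _ _)

variable {u v : V} {t : ℕ}

lemma bourgainRadius_le : bourgainRadius u v t ≤ dist u v / 4 :=
  min'_le _ _ (mem_insert_self _ _)

lemma bourgainRadius_le_of_card {ρ : ℝ} (hρ : ρ ∈ pairDists V)
    (hu : 2 ^ t ≤ #{w | dist u w ≤ ρ}) (hv : 2 ^ t ≤ #{w | dist v w ≤ ρ}) :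
    bourgainRadius u v t ≤ ρ :=
  min'_le _ _ (mem_insert_of_mem (mem_filter.mpr ⟨hρ, hu, hv⟩))

lemma bourgainRadius_nonneg : 0 ≤ bourgainRadius u v t := by
  refine le_min' _ _ _ fun ρ hρ ↦ ?_
  rcases mem_insert.mp hρ with rfl | hρ
  · positivity
  obtain ⟨x, -, rfl⟩ := mem_image.mp (mem_filter.mp hρ).1
  exact dist_nonneg

lemma card_ball_of_bourgainRadius_lt (h : bourgainRadius u v t < dist u v / 4) :
    2 ^ t ≤ #{w | dist u w ≤ bourgainRadius u v t} ∧
      2 ^ t ≤ #{w | dist v w ≤ bourgainRadius u v t} := by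
  have hmem := min'_mem _ (insert_nonempty (dist u v / 4) {ρ ∈ pairDists V |
    2 ^ t ≤ #{w | dist u w ≤ ρ} ∧ 2 ^ t ≤ #{w | dist v w ≤ ρ}})
  rw [mem_insert, mem_filter] at hmem
  exact (hmem.resolve_left h.ne).2

lemma bourgainRadius_zero : bourgainRadius u v 0 = 0 := by
  refine le_antisymm (bourgainRadius_le_of_card (by simpa using dist_mem_pairDists u u) ?_ ?_)
    bourgainRadius_nonneg <;>
  exact one_le_card.mpr ⟨_, mem_filter.mpr ⟨mem_univ _, (dist_self _).le⟩⟩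

lemma bourgainRadius_mono : Monotone (bourgainRadius u v) := by
  intro t t' htt'
  refine le_min' _ _ _ fun ρ hρ ↦ ?_
  rcases mem_insert.mp hρ with rfl | hρ
  · exact bourgainRadius_le
  obtain ⟨hρ, hu, hv⟩ := mem_filter.mp hρ
  have h2 : 2 ^ t ≤ 2 ^ t' := Nat.pow_le_pow_right two_pos htt'
  exact bourgainRadius_le_of_card hρ (h2.trans hu) (h2.trans hv)

lemma bourgainRadius_of_card_le (h : Fintype.card V ≤ 2 ^ t) :
    bourgainRadius u v t = dist u v / 4 := by
  refine le_antisymm bourgainRadius_le (le_min' _ _ _ fun ρ hρ ↦ ?_)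
  rcases mem_insert.mp hρ with rfl | hρ
  · exact le_rfl
  obtain ⟨-, hu, -⟩ := mem_filter.mp hρ
  have hball : ({w | dist u w ≤ ρ} : Finset V) = univ :=
    eq_univ_of_card _ (le_antisymm (card_le_univ _) (h.trans hu))
  have hv : v ∈ ({w | dist u w ≤ ρ} : Finset V) := by rw [hball]; exact mem_univ v
  rw [mem_filter] at hv
  linarith [hv.2, dist_nonneg (x := u) (y := v)]

lemma card_ball_lt_of_bourgainRadius_pos (h : 0 < bourgainRadius u v t) :
    #{w | dist u w < bourgainRadius u v t} < 2 ^ t ∨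
      #{w | dist v w < bourgainRadius u v t} < 2 ^ t := by
  -- Otherwise the largest distance below the radius would already qualify.
  by_contra! ⟨hu, hv⟩
  set r := bourgainRadius u v t
  have hne : {ρ ∈ pairDists V | ρ < r}.Nonempty :=
    ⟨0, mem_filter.mpr ⟨by simpa using dist_mem_pairDists u u, h⟩⟩
  set ρ := {ρ ∈ pairDists V | ρ < r}.max' hne
  have hρ := mem_filter.mp (max'_mem _ hne)
  have hball (x : V) : ({w | dist x w < r} : Finset V) ⊆ ({w | dist x w ≤ ρ} : Finset V) :=
    fun w hw ↦ mem_filter.mpr ⟨mem_univ _, le_max' {ρ ∈ pairDists V | ρ < r} _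
      (mem_filter.mpr ⟨dist_mem_pairDists x w, (mem_filter.mp hw).2⟩)⟩
  have := bourgainRadius_le_of_card hρ.1 (hu.trans (card_le_card (hball u)))
    (hv.trans (card_le_card (hball v)))
  exact absurd hρ.2 this.not_gt

end BourgainRadius

section Embedding

variable {V : Type*} [MetricSpace V] [Fintype V]

lemma one_ninth_le_sum_bernoulliWeight_infDist [DecidableEq V] {x y : V} {s₀ s₁ : ℝ} (t : ℕ)
    (hs : s₀ + s₁ ≤ dist x y) (hx : #{w | dist x w < s₁} < 2 ^ (t + 1))
    (hy : 2 ^ t ≤ #{w | dist y w ≤ s₀}) :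
    1 / 9 ≤ ∑ A ∈ ({A : Finset V | s₁ - s₀ ≤ infDist x (A : Set V) - infDist y A} : Finset _),
      bernoulliWeight (2 ^ (t + 1))⁻¹ A := by
  have hdisj : Disjoint ({w | dist x w < s₁} : Finset V) ({w | dist y w ≤ s₀} : Finset V) := by
    refine disjoint_filter.mpr fun w _ hxw hyw ↦ ?_
    linarith [dist_triangle_right x y w]
  -- It suffices that `A` misses the open ball around `x` and meets the closed ball around `y`.
  refine (one_ninth_le_sum_bernoulliWeight t hdisj hx hy).trans
    (sum_filter_le_sum_filter_of_imp (bernoulliWeight_inv_two_pow_nonneg _) fun A hA ↦ ?_)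
  obtain ⟨hA₁, hA₂⟩ := hA
  obtain ⟨w, hwA, hwy⟩ := not_disjoint_iff.mp hA₂
  refine sub_le_infDist_sub_infDist (fun z hz ↦ ?_) (mem_coe.mpr hwA) (mem_filter.mp hwy).2
  by_contra! hz'
  exact disjoint_left.mp hA₁ hz (mem_filter.mpr ⟨mem_univ z, hz'⟩)

lemma one_ninth_le_sum_bernoulliWeight_bourgainRadius [DecidableEq V] (u v : V) (t : ℕ) :
    1 / 9 ≤ ∑ A ∈ ({A : Finset V | bourgainRadius u v (t + 1) - bourgainRadius u v t ≤
      |infDist u (A : Set V) - infDist v A|} : Finset _), bernoulliWeight (2 ^ (t + 1))⁻¹ A := by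
  set s₀ := bourgainRadius u v t
  set s₁ := bourgainRadius u v (t + 1)
  rcases le_or_gt s₁ s₀ with h | h
  · rw [filter_true_of_mem fun A _ ↦ (sub_nonpos.mpr h).trans (abs_nonneg _),
      sum_bernoulliWeight]
    norm_num
  have hs₁ : s₁ ≤ dist u v / 4 := bourgainRadius_le
  have hs : s₀ + s₁ ≤ dist u v := by linarith [bourgainRadius_nonneg (u := u) (v := v) (t := t)]
  obtain ⟨hu, hv⟩ := card_ball_of_bourgainRadius_lt (h.trans_le hs₁)
  rcases card_ball_lt_of_bourgainRadius_pos (bourgainRadius_nonneg.trans_lt h) with hu' | hv'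
  · exact (one_ninth_le_sum_bernoulliWeight_infDist t hs hu' hv).trans
      (sum_filter_le_sum_filter_of_imp (bernoulliWeight_inv_two_pow_nonneg _)
        fun A hA ↦ hA.trans (le_abs_self _))
  · exact (one_ninth_le_sum_bernoulliWeight_infDist t (dist_comm u v ▸ hs) hv' hu).trans
      (sum_filter_le_sum_filter_of_imp (bernoulliWeight_inv_two_pow_nonneg _)
        fun A hA ↦ (hA.trans (le_abs_self _)).trans_eq (abs_sub_comm _ _))

lemma exists_forall_le_card_bourgainRadius_le (t m : ℕ) :
    ∃ A : Fin m → Finset V, ∀ u v : V, m / 18 - 2 * log (Fintype.card V) ≤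
      #{j | bourgainRadius u v (t + 1) - bourgainRadius u v t ≤
        |infDist u (A j : Set V) - infDist v (A j)|} := by
  classical
  obtain ⟨A, hA⟩ := exists_forall_le_card_filter (δ := 1 / 9)
    (bernoulliWeight_inv_two_pow_nonneg (t + 1))
    (sum_bernoulliWeight _)
    (fun x : V × V ↦ fun A : Finset V ↦ bourgainRadius x.1 x.2 (t + 1) - bourgainRadius x.1 x.2 t ≤
      |infDist x.1 (A : Set V) - infDist x.2 A|)
    (fun x ↦ one_ninth_le_sum_bernoulliWeight_bourgainRadius x.1 x.2 t) m
  refine ⟨A, fun u v ↦ ?_⟩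
  convert hA (u, v) using 1
  rw [Fintype.card_prod, Nat.cast_mul, ← sq, log_pow]
  ring

theorem exists_bourgain_embedding {p : ℝ} (hp : 1 ≤ p) {L m : ℕ} (hL₀ : 0 < L) (hm₀ : 0 < m)
    (hL : Fintype.card V ≤ 2 ^ L) (hm : 72 * log (Fintype.card V) ≤ m) :
    ∃ f : V → Fin (L * m) → ℝ, ∀ u v : V,
      (dist u v / (144 * L)) ^ p ≤ ∑ i, |f u i - f v i| ^ p ∧
        ∑ i, |f u i - f v i| ^ p ≤ dist u v ^ p := by
  have : Nonempty (Fin L) := ⟨⟨0, hL₀⟩⟩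
  have : Nonempty (Fin m) := ⟨⟨0, hm₀⟩⟩
  choose A hA using fun t : Fin L ↦ exists_forall_le_card_bourgainRadius_le (V := V) t m
  set g : V → Fin L × Fin m → ℝ := fun z x ↦ infDist z (A x.1 x.2 : Set V)
  set σ : ℝ := ((L * m : ℝ)⁻¹) ^ p⁻¹
  have hσ : σ ^ p = (L * m : ℝ)⁻¹ := rpow_inv_rpow (by positivity) (by positivity)
  refine ⟨fun z i ↦ σ * g z (finProdFinEquiv.symm i), fun u v ↦ ?_⟩
  rw [sum_abs_mul_sub_mul_rpow (by positivity), hσ,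
    finProdFinEquiv.symm.sum_comp (fun x ↦ |g u x - g v x| ^ p), Fintype.sum_prod_type]
  constructor
  · have htel : ∑ t : Fin L, (bourgainRadius u v (t + 1) - bourgainRadius u v t) =
        dist u v / 4 := by
      rw [Fin.sum_univ_eq_sum_range (fun t ↦ bourgainRadius u v (t + 1) - bourgainRadius u v t),
        sum_range_sub, bourgainRadius_of_card_le hL, bourgainRadius_zero, sub_zero]
    have key := rpow_mul_sum_div_card_le (fun t j ↦ g u (t, j) - g v (t, j)) hp (c := 1 / 36)
      (by norm_num) (by norm_num) (fun t ↦ sub_nonneg.mpr (bourgainRadius_mono (Nat.le_succ t)))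
      (fun t ↦ (hA t u v).trans' (by rw [Fintype.card_fin]; linarith))
    rw [htel, Fintype.card_fin, Fintype.card_fin] at key
    convert key using 1
    · congr 1
      ring
    · rw [div_eq_inv_mul]
  · calc (L * m : ℝ)⁻¹ * ∑ t, ∑ j, |g u (t, j) - g v (t, j)| ^ p
        ≤ (L * m : ℝ)⁻¹ * ∑ _t : Fin L, ∑ _j : Fin m, dist u v ^ p := by
          gcongr with t _ j
          exact abs_infDist_sub_infDist_le _ u v
      _ = dist u v ^ p := by
          simp only [sum_const, card_univ, Fintype.card_fin, nsmul_eq_mul]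
          field_simp

end Embedding

/-- **Bourgain's theorem (general ℓ_p case).**
Fix a real `p ≥ 1`. There exist absolute constants `c > 0` and `C > 0` such that
every finite metric space `(V, d)` with `|V| = n ≥ 2` embeds into `ℝ^k` with the
ℓ_p metric `‖x - y‖_p = (∑ i, |xᵢ - yᵢ| ^ p) ^ (1/p)`, for some `k ≤ c · (log n)²`,
with distortion at most `C · log n`. -/
theorem bourgain_lp (p : ℝ) (hp : 1 ≤ p) :
    ∃ c C : ℝ, 0 < c ∧ 0 < C ∧
      ∀ (V : Type) [MetricSpace V] [Fintype V],
        2 ≤ Fintype.card V →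
        ∃ (k : ℕ) (f : V → Fin k → ℝ),
          (k : ℝ) ≤ c * (Real.log (Fintype.card V)) ^ 2 ∧
          ∀ u v : V,
            (1 / (C * Real.log (Fintype.card V))) * dist u v ≤
                (∑ i, |f u i - f v i| ^ p) ^ (1 / p) ∧
            (∑ i, |f u i - f v i| ^ p) ^ (1 / p) ≤ dist u v := by
  refine ⟨222, 432, by norm_num, by norm_num, fun V _ _ hn ↦ ?_⟩
  set n := Fintype.card V
  have hlog : log 2 ≤ log n := log_le_log two_pos (by exact_mod_cast hn)
  have hlog2 := log_two_gt_d9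
  have hp₀ : 0 < p := one_pos.trans_le hp
  set L := Nat.clog 2 n
  set m := ⌈72 * log n⌉₊
  have hL₀ : 0 < L := Nat.clog_pos one_lt_two hn
  have hL : (L : ℝ) ≤ 3 * log n := clog_two_le_three_mul_log hn
  have hm : (m : ℝ) ≤ 74 * log n := by
    linarith [Nat.ceil_lt_add_one (show 0 ≤ 72 * log n by positivity)]
  obtain ⟨f, hf⟩ := exists_bourgain_embedding hp hL₀
    (Nat.ceil_pos.mpr (by linarith)) (Nat.le_pow_clog one_lt_two n) (Nat.le_ceil _)
  refine ⟨L * m, f, ?_, fun u v ↦ ⟨?_, ?_⟩⟩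
  · push_cast
    nlinarith [mul_le_mul hL hm (by positivity) (by positivity)]
  · calc 1 / (432 * log n) * dist u v ≤ dist u v / (144 * L) := by
          rw [one_div_mul_eq_div]
          exact div_le_div_of_nonneg_left dist_nonneg
            (mul_pos (by norm_num) (Nat.cast_pos.mpr hL₀)) (by linarith)
      _ ≤ _ := by
          rw [one_div, le_rpow_inv_iff_of_pos (by positivity)
            (sum_nonneg fun i _ ↦ by positivity) hp₀]
          exact (hf u v).1
  · rw [one_div, rpow_inv_le_iff_of_pos (sum_nonneg fun i _ ↦ by positivity) dist_nonneg hp₀]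
    exact (hf u v).2
end

section
/- There exist absolute constants c > 0 and C > 0 such that for every finite metric space (V, d) with |V| = n ≥ 2 there exist a natural number k ≤ c · (log n)^2 and nonempty subsets S₁, …, S_k ⊆ V such that the Fréchet-type map f : V → ℝ^k defined by f(v)ᵢ = d(v, Sᵢ) / k satisfies, for all u, v ∈ V, (1 / (C · log n)) · d(u, v) ≤ ‖f(u) − f(v)‖₁ ≤ d(u, v). -/
/-!
Bourgain's argument, with the probabilistic method replaced by counting. Let `L = ⌈log₂ n⌉`.
For `u ≠ v` let `ρⱼ` be the least radius at which the closed balls around `u` and around `v`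
both contain `2ʲ` points, capped at `d(u,v)/3`, so that `ρ₀ = 0` and `ρ_L = d(u,v)/3`.
If `ρⱼ < ρⱼ₊₁`, a random set containing each point independently with probability `2^-(j+1)`
misses the open `ρⱼ₊₁`-ball around one of `u, v` (it has fewer than `2^(j+1)` points) and meets
the closed `ρⱼ`-ball around the other (it has at least `2ʲ` points) with probability at least
`1/9`; the distances of such a set to `u` and `v` differ by at least `ρⱼ₊₁ - ρⱼ`.
Drawing `64 L` sets at every scale, a Chernoff-type bound and a union bound over the at most
`n² L` triples `(u, v, j)` give a draw with at least `L` successes for every triple; summing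
over the scales, the `k = 64 L²` sets give `∑ᵢ |d(u,Sᵢ) - d(v,Sᵢ)| ≥ L d(u,v) / 3`.
The upper bound holds because every `d(·, S)` is 1-Lipschitz.
-/

noncomputable def anchorSetDist {V : Type*} [MetricSpace V]
    (v : V) (S : Finset V) (hS : S.Nonempty) : ℝ :=
  S.inf' hS fun u => dist v u

open Finset Real

namespace Bourgain

section Repetition

variable {Ω ι : Type*} [Fintype Ω]

-- Weight an outcome by `1` on success and `2` on failure: the total weight of `Ω^m` is the
-- `m`-th power of that of `Ω`, and a sequence with at least `a` failures weighs at least `2^a`.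
theorem two_pow_mul_card_le_of_failures (P : Ω → Prop) [DecidablePred P] (m a : ℕ) :
    2 ^ a * #{ω : Fin m → Ω | a ≤ #{t | ¬ P (ω t)}} ≤ (#{x | P x} + 2 * #{x | ¬ P x}) ^ m := by
  set c : Ω → ℕ := fun x => if P x then 1 else 2
  have hprod (ω : Fin m → Ω) : ∏ t, c (ω t) = 2 ^ #{t | ¬ P (ω t)} := by
    simp [c, prod_ite]
  have hsum : ∑ x, c x = #{x | P x} + 2 * #{x | ¬ P x} := by
    simp [c, sum_ite, mul_comm]
  calc 2 ^ a * #{ω : Fin m → Ω | a ≤ #{t | ¬ P (ω t)}}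
      = ∑ ω : Fin m → Ω with a ≤ #{t | ¬ P (ω t)}, 2 ^ a := by
        rw [sum_const, smul_eq_mul, mul_comm]
    _ ≤ ∑ ω : Fin m → Ω with a ≤ #{t | ¬ P (ω t)}, ∏ t, c (ω t) :=
        sum_le_sum fun ω hω => (hprod ω).symm ▸ Nat.pow_le_pow_right two_pos (mem_filter.1 hω).2
    _ ≤ ∑ ω : Fin m → Ω, ∏ t, c (ω t) := sum_le_sum_of_subset (filter_subset _ _)
    _ = (#{x | P x} + 2 * #{x | ¬ P x}) ^ m := by rw [← Fintype.sum_pow, hsum]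

theorem exists_forall_le_card_filter [Nonempty Ω] (I : Finset ι) (P : ι → Ω → Prop)
    [∀ i, DecidablePred (P i)] {p : ℝ} {m g : ℕ}
    (hP : ∀ i ∈ I, p * Fintype.card Ω ≤ #{x | P i x})
    (hI : #I * (2 - p) ^ m < 2 ^ (m - g)) :
    ∃ ω : Fin m → Ω, ∀ i ∈ I, g ≤ #{t | P i (ω t)} := by
  classical
  by_contra! hbad
  set bad : ι → Finset (Fin m → Ω) := fun i => {ω | m - g ≤ #{t | ¬ P i (ω t)}}
  have hcover : (univ : Finset (Fin m → Ω)) ⊆ I.biUnion bad := by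
    intro ω _
    obtain ⟨i, hi, hlt⟩ := hbad ω
    have hsplit := card_filter_add_card_filter_not (s := univ) fun t => P i (ω t)
    rw [card_univ, Fintype.card_fin] at hsplit
    exact mem_biUnion.2 ⟨i, hi, mem_filter.2 ⟨mem_univ _, by omega⟩⟩
  have hbad_le (i : ι) (hi : i ∈ I) :
      (2 : ℝ) ^ (m - g) * #(bad i) ≤ ((2 - p) * Fintype.card Ω) ^ m := by
    have hcard := card_filter_add_card_filter_not (s := univ) fun x => P i x
    rw [card_univ] at hcard
    calc (2 : ℝ) ^ (m - g) * #(bad i)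
        ≤ ((#{x | P i x} + 2 * #{x | ¬ P i x} : ℕ) : ℝ) ^ m := by
          exact_mod_cast two_pow_mul_card_le_of_failures (P i) m (m - g)
      _ ≤ ((2 - p) * Fintype.card Ω) ^ m := by
          have hPi := hP i hi
          rw [← hcard] at hPi ⊢
          push_cast at hPi ⊢
          gcongr
          linarith
  have hΩ : (0 : ℝ) < (Fintype.card Ω : ℝ) ^ m := by positivity
  have := calc (2 : ℝ) ^ (m - g) * (Fintype.card Ω : ℝ) ^ m
      = 2 ^ (m - g) * #(univ : Finset (Fin m → Ω)) := by simp
    _ ≤ 2 ^ (m - g) * ∑ i ∈ I, #(bad i) := by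
        gcongr
        exact_mod_cast (card_le_card hcover).trans card_biUnion_le
    _ = ∑ i ∈ I, 2 ^ (m - g) * (#(bad i) : ℝ) := by push_cast; rw [mul_sum]
    _ ≤ ∑ _i ∈ I, ((2 - p) * Fintype.card Ω) ^ m := sum_le_sum hbad_le
    _ = #I * (2 - p) ^ m * (Fintype.card Ω : ℝ) ^ m := by
        rw [sum_const, nsmul_eq_mul, mul_pow]
        ring
  nlinarith

end Repetition

theorem exp_neg_one_le_one_sub_pow {q : ℝ} {A : ℕ} (hA : (A + 1) * q ≤ 1) :
    exp (-1) ≤ (1 - q) ^ A := by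
  rcases A.eq_zero_or_pos with rfl | hA0
  · simp
  have hA1 : (1 : ℝ) ≤ A := by exact_mod_cast hA0
  have hq1 : q < 1 := by nlinarith
  have hstep : exp (-(q / (1 - q))) ≤ 1 - q := by
    rw [exp_neg, inv_le_comm₀ (exp_pos _) (by linarith)]
    calc (1 - q)⁻¹ = q / (1 - q) + 1 := by
          rw [div_add_one (by linarith), add_sub_cancel, one_div]
      _ ≤ exp (q / (1 - q)) := add_one_le_exp _
  calc exp (-1) ≤ exp (A * -(q / (1 - q))) := by
        gcongr
        rw [mul_neg, neg_le_neg_iff, ← mul_div_assoc, div_le_one (by linarith)]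
        linarith
    _ = exp (-(q / (1 - q))) ^ A := exp_nat_mul _ _
    _ ≤ (1 - q) ^ A := pow_le_pow_left₀ (exp_pos _).le hstep A

theorem one_sub_pow_le_exp_neg {q : ℝ} (hq : q ≤ 1) (B : ℕ) : (1 - q) ^ B ≤ exp (-(B * q)) :=
  calc (1 - q) ^ B ≤ exp (-q) ^ B := pow_le_pow_left₀ (by linarith) (one_sub_le_exp_neg q) B
    _ = exp (-(B * q)) := by rw [← exp_nat_mul, mul_neg]

theorem one_ninth_le_one_sub_pow_mul {q : ℝ} {A B : ℕ} (hA : (A + 1) * q ≤ 1)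
    (hB : 1 ≤ 2 * B * q) : 1 / 9 ≤ (1 - q) ^ A * (1 - (1 - q) ^ B) := by
  have hq1 : q ≤ 1 := by nlinarith [(A.cast_nonneg : (0 : ℝ) ≤ A), (B.cast_nonneg : (0 : ℝ) ≤ B)]
  have hmiss : 1 / 3 ≤ (1 - q) ^ A :=
    le_trans (by linarith [exp_neg_one_gt_d9]) (exp_neg_one_le_one_sub_pow hA)
  have hhit : (1 - q) ^ B ≤ 2 / 3 := by
    have hhalf : exp (-(1 / 2)) ≤ 2 / 3 := by
      rw [exp_neg, inv_le_comm₀ (exp_pos _) (by norm_num)]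
      linarith [add_one_le_exp (1 / 2)]
    calc (1 - q) ^ B ≤ exp (-(B * q)) := one_sub_pow_le_exp_neg hq1 B
      _ ≤ exp (-(1 / 2)) := exp_le_exp.2 (by linarith)
      _ ≤ 2 / 3 := hhalf
  calc (1 / 9 : ℝ) = 1 / 3 * (1 / 3) := by norm_num
    _ ≤ (1 - q) ^ A * (1 - (1 - q) ^ B) := by gcongr; linarith

section Sampling

variable {V : Type*} [Fintype V] {M : ℕ}

-- A uniformly random `σ : V → Fin M` puts each point into `sampleSet a σ` independently with
-- probability `a / M`, so probabilities of events are counted as numbers of such `σ`.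
def sampleSet (a : ℕ) (σ : V → Fin M) : Finset V := {w | (σ w : ℕ) < a}

theorem card_disjoint_sampleSet [DecidableEq V] (a : ℕ) (C : Finset V) :
    #{σ : V → Fin M | Disjoint (sampleSet a σ) C} =
      (M - a) ^ #C * M ^ (Fintype.card V - #C) := by
  have hpi : ({σ : V → Fin M | Disjoint (sampleSet a σ) C} : Finset _) =
      Fintype.piFinset fun w =>
        if w ∈ C then ({b : Fin M | a ≤ (b : ℕ)} : Finset (Fin M)) else univ := by
    ext σ
    simp only [mem_filter, mem_univ, true_and, Fintype.mem_piFinset, sampleSet, disjoint_left]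
    refine ⟨fun h w => ?_, fun h w hw hC => ?_⟩
    · split_ifs with hC
      · simpa using fun hlt => h hlt hC
      · exact mem_univ _
    · exact absurd (by simpa [hC] using h w) (not_le.2 hw)
  have hge : #{b : Fin M | a ≤ (b : ℕ)} = M - a := by
    have := card_filter_add_card_filter_not (s := (univ : Finset (Fin M))) fun b => (b : ℕ) < a
    simp only [not_lt, card_univ, Fintype.card_fin, Fin.card_filter_val_lt] at this
    omega
  rw [hpi, Fintype.card_piFinset]
  simp only [apply_ite card, hge, card_univ, Fintype.card_fin]
  rw [prod_ite, prod_const, prod_const, filter_mem_eq_inter, univ_inter, filter_not,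
    filter_mem_eq_inter, univ_inter, card_sdiff_of_subset (subset_univ C), card_univ]

theorem card_disjoint_sampleSet_eq [DecidableEq V] {a : ℕ} (hM : 0 < M) (ha : a ≤ M)
    (C : Finset V) :
    (#{σ : V → Fin M | Disjoint (sampleSet a σ) C} : ℝ) =
      (1 - a / M) ^ #C * M ^ Fintype.card V := by
  have hC : #C ≤ Fintype.card V := card_le_univ C
  rw [card_disjoint_sampleSet, one_sub_div (by positivity), div_pow, ← Nat.sub_add_cancel hC,
    Nat.add_sub_cancel]
  push_cast [Nat.cast_sub ha, pow_add]
  field_simp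

theorem card_separating_sampleSet_eq [DecidableEq V] {a : ℕ} (hM : 0 < M) (ha : a ≤ M)
    {A B : Finset V} (hAB : Disjoint A B) :
    (#{σ : V → Fin M | Disjoint (sampleSet a σ) A ∧ ¬ Disjoint (sampleSet a σ) B} : ℝ) =
      (1 - a / M) ^ #A * (1 - (1 - a / M) ^ #B) * M ^ Fintype.card V := by
  set D : Finset V → Finset (V → Fin M) := fun C => {σ | Disjoint (sampleSet a σ) C}
  have hsdiff : ({σ : V → Fin M | Disjoint (sampleSet a σ) A ∧ ¬ Disjoint (sampleSet a σ) B} :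
      Finset _) = D A \ D (A ∪ B) := by
    ext σ
    simp only [D, mem_filter, mem_sdiff, mem_univ, true_and, disjoint_union_right]
    tauto
  have hsub : D (A ∪ B) ⊆ D A := monotone_filter_right _ fun _ _ h => (disjoint_union_right.1 h).1
  rw [hsdiff, card_sdiff_of_subset hsub, Nat.cast_sub (card_le_card hsub),
    card_disjoint_sampleSet_eq hM ha, card_disjoint_sampleSet_eq hM ha, card_union_of_disjoint hAB]
  ring

theorem le_card_separating_sampleSet [DecidableEq V] {L j : ℕ} (hj : j < L) {A B : Finset V}
    (hAB : Disjoint A B) (hA : #A < 2 ^ (j + 1)) (hB : 2 ^ j ≤ #B) :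
    ((2 : ℝ) ^ L) ^ Fintype.card V / 9 ≤
      #{σ : V → Fin (2 ^ L) | Disjoint (sampleSet (2 ^ (L - (j + 1))) σ) A ∧
        ¬ Disjoint (sampleSet (2 ^ (L - (j + 1))) σ) B} := by
  rw [card_separating_sampleSet_eq (by positivity)
    (Nat.pow_le_pow_right two_pos (Nat.sub_le _ _)) hAB]
  have hq : ((2 ^ (L - (j + 1)) : ℕ) : ℝ) / ((2 ^ L : ℕ) : ℝ) = 1 / 2 ^ (j + 1) := by
    push_cast
    rw [pow_sub₀ _ two_ne_zero hj]
    field_simp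
  have hA' : ((#A : ℝ) + 1) ≤ 2 ^ (j + 1) := by exact_mod_cast hA
  have hB' : (2 : ℝ) ^ (j + 1) ≤ 2 * #B := by
    rw [pow_succ']
    exact_mod_cast Nat.mul_le_mul_left 2 hB
  have hprob := one_ninth_le_one_sub_pow_mul (A := #A) (B := #B) (q := 1 / 2 ^ (j + 1))
    (by rw [mul_one_div, div_le_one (by positivity)]; exact hA')
    (by rw [mul_one_div, le_div_iff₀ (by positivity)]; linarith)
  rw [hq]
  push_cast
  have : (0 : ℝ) ≤ ((2 : ℝ) ^ L) ^ Fintype.card V := by positivity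
  nlinarith

-- The fallback `univ` never replaces a separating sample, as those are nonempty.
open Classical in
noncomputable def anchorFamily {L m : ℕ} (ω : Fin m → V → Fin (2 ^ L)) (p : Fin L × Fin m) :
    Finset V :=
  if (sampleSet (2 ^ (L - (p.1 + 1))) (ω p.2)).Nonempty then
    sampleSet (2 ^ (L - (p.1 + 1))) (ω p.2) else univ

theorem anchorFamily_nonempty [Nonempty V] {L m : ℕ} (ω : Fin m → V → Fin (2 ^ L))
    (p : Fin L × Fin m) : (anchorFamily ω p).Nonempty := by
  unfold anchorFamily
  split_ifs with h
  exacts [h, univ_nonempty]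

end Sampling

section Radii

variable {V : Type*} [MetricSpace V] [Fintype V]

-- `pairRadius u v t` is the least `r ≤ d(u,v)/3` at which the closed `r`-balls around `u` and
-- around `v` both have `t` points, or `d(u,v)/3` if there is none. Ball sizes only change at
-- distances from the centre, so the minimum may be taken over those.
noncomputable def pairRadius (u v : V) (t : ℕ) : ℝ :=
  (insert (dist u v / 3) {r ∈ univ.image (dist u) ∪ univ.image (dist v) |
    r ≤ dist u v / 3 ∧ t ≤ #{w | dist u w ≤ r} ∧ t ≤ #{w | dist v w ≤ r}}).min'
    (insert_nonempty _ _)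

variable (u v : V) (t : ℕ)

theorem pairRadius_le : pairRadius u v t ≤ dist u v / 3 :=
  min'_le _ _ (mem_insert_self _ _)

theorem pairRadius_nonneg : 0 ≤ pairRadius u v t := by
  refine le_min' _ _ _ fun r hr => ?_
  simp only [mem_insert, mem_filter, mem_union, mem_image, mem_univ, true_and] at hr
  rcases hr with rfl | ⟨⟨w, rfl⟩ | ⟨w, rfl⟩, -⟩
  exacts [by positivity, dist_nonneg, dist_nonneg]

theorem pairRadius_mono : Monotone (pairRadius u v) := fun _ _ h =>
  min'_subset _ <| insert_subset_insert _ <| monotone_filter_right _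
    fun _ _ hr => ⟨hr.1, h.trans hr.2.1, h.trans hr.2.2⟩

theorem pairRadius_one : pairRadius u v 1 = 0 := by
  refine le_antisymm (min'_le _ _ (mem_insert_of_mem (mem_filter.2 ⟨?_, ?_, ?_, ?_⟩)))
    (pairRadius_nonneg u v 1)
  · exact mem_union_left _ (mem_image.2 ⟨u, mem_univ _, dist_self u⟩)
  · positivity
  · exact one_le_card.2 ⟨u, by simp⟩
  · exact one_le_card.2 ⟨v, by simp⟩

variable {u v t}

theorem pairRadius_eq_of_card_le (huv : u ≠ v) (ht : Fintype.card V ≤ t) :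
    pairRadius u v t = dist u v / 3 := by
  refine le_antisymm (pairRadius_le u v t) (le_min' _ _ _ fun r hr => ?_)
  rcases mem_insert.1 hr with rfl | hr
  · exact le_rfl
  obtain ⟨-, hr3, hcard, -⟩ := mem_filter.1 hr
  have hv : v ∉ ({w | dist u w ≤ r} : Finset V) := by
    simp only [mem_filter, mem_univ, true_and, not_le]
    linarith [dist_pos.2 huv]
  have := card_lt_card ⟨subset_univ _, fun h => hv (h (mem_univ v))⟩
  rw [card_univ] at this
  omega

theorem le_card_of_pairRadius_lt (h : pairRadius u v t < dist u v / 3) :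
    t ≤ #{w | dist u w ≤ pairRadius u v t} ∧ t ≤ #{w | dist v w ≤ pairRadius u v t} := by
  rcases mem_insert.1 (show pairRadius u v t ∈ insert _ _ from min'_mem _ _) with hρ | hρ
  · exact absurd hρ h.ne
  · exact (mem_filter.1 hρ).2.2

-- Open balls of radius `ρ` are closed balls of the largest candidate radius below `ρ`,
-- which by minimality of `ρ` fails the cardinality test.
theorem card_ball_lt_of_pairRadius_pos (h : 0 < pairRadius u v t) :
    #{w | dist u w < pairRadius u v t} < t ∨ #{w | dist v w < pairRadius u v t} < t := by
  set ρ := pairRadius u v t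
  by_contra! hcard
  set below := {r ∈ univ.image (dist u) ∪ univ.image (dist v) | r < ρ}
  have hne : below.Nonempty := ⟨0, mem_filter.2
    ⟨mem_union_left _ (mem_image.2 ⟨u, mem_univ _, dist_self u⟩), h⟩⟩
  obtain ⟨hr, hrρ⟩ := mem_filter.1 (below.max'_mem hne)
  have hball (x : V) (hx : x = u ∨ x = v) :
      ({w | dist x w < ρ} : Finset V) ⊆ ({w | dist x w ≤ below.max' hne} : Finset V) :=
      fun w hw => by
    simp only [mem_filter, mem_univ, true_and] at hw ⊢
    refine le_max' below _ (mem_filter.2 ⟨?_, hw⟩)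
    rcases hx with rfl | rfl
    exacts [mem_union_left _ (mem_image_of_mem _ (mem_univ w)),
      mem_union_right _ (mem_image_of_mem _ (mem_univ w))]
  have hcand : ρ ≤ below.max' hne := min'_le _ _ <| mem_insert_of_mem <| mem_filter.2
    ⟨hr, by linarith [pairRadius_le u v t], hcard.1.trans (card_le_card (hball u (.inl rfl))),
      hcard.2.trans (card_le_card (hball v (.inr rfl)))⟩
  linarith

end Radii

section AnchorSets

variable {V : Type*} [MetricSpace V]

theorem anchorSetDist_sub_le (u v : V) (S : Finset V) (hS : S.Nonempty) :
    anchorSetDist u S hS - anchorSetDist v S hS ≤ dist u v := by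
  obtain ⟨w, hw, hvw⟩ := exists_mem_eq_inf' hS (dist v)
  have hu : anchorSetDist u S hS ≤ dist u w := inf'_le _ hw
  have hv : anchorSetDist v S hS = dist v w := hvw
  linarith [dist_triangle u v w]

theorem abs_anchorSetDist_sub_le (u v : V) (S : Finset V) (hS : S.Nonempty) :
    |anchorSetDist u S hS - anchorSetDist v S hS| ≤ dist u v :=
  abs_sub_le_iff.2 ⟨anchorSetDist_sub_le u v S hS, dist_comm u v ▸ anchorSetDist_sub_le v u S hS⟩

theorem sum_abs_anchorSetDist_div_sub_le {k : ℕ} (S : Fin k → Finset V)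
    (hS : ∀ i, (S i).Nonempty) (u v : V) :
    ∑ i, |anchorSetDist u (S i) (hS i) / k - anchorSetDist v (S i) (hS i) / k| ≤ dist u v := by
  calc ∑ i, |anchorSetDist u (S i) (hS i) / k - anchorSetDist v (S i) (hS i) / k|
      ≤ ∑ _i : Fin k, dist u v / k := sum_le_sum fun i _ => by
        rw [← sub_div, abs_div, Nat.abs_cast]
        gcongr
        exact abs_anchorSetDist_sub_le u v (S i) (hS i)
    _ = k * (dist u v / k) := by simp
    _ ≤ dist u v := by
        rcases eq_or_ne k 0 with rfl | hk
        · simp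
        · rw [mul_div_cancel₀ _ (by exact_mod_cast hk)]

variable [Fintype V]

def Separates (S : Finset V) (x y : V) (R r : ℝ) : Prop :=
  Disjoint S ({w | dist x w < R} : Finset V) ∧ ¬ Disjoint S ({w | dist y w ≤ r} : Finset V)

theorem Separates.nonempty {S : Finset V} {x y : V} {R r : ℝ} (h : Separates S x y R r) :
    S.Nonempty := by
  obtain ⟨w, hw, -⟩ := not_disjoint_iff.1 h.2
  exact ⟨w, hw⟩

theorem Separates.sub_le_anchorSetDist_sub {S : Finset V} {x y : V} {R r : ℝ}
    (h : Separates S x y R r) (hS : S.Nonempty) :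
    R - r ≤ anchorSetDist x S hS - anchorSetDist y S hS := by
  obtain ⟨w, hw, hyw⟩ := not_disjoint_iff.1 h.2
  have hx : R ≤ anchorSetDist x S hS := le_inf' hS _ fun w' hw' => by
    simpa using disjoint_left.1 h.1 hw'
  have hy : anchorSetDist y S hS ≤ dist y w := inf'_le _ hw
  simp only [mem_filter, mem_univ, true_and] at hyw
  linarith

end AnchorSets

theorem clog_two_le_three_mul_log {n : ℕ} (hn : 2 ≤ n) : (Nat.clog 2 n : ℝ) ≤ 3 * Real.log n := by
  set L := Nat.clog 2 n
  have hL : 1 ≤ L := Nat.clog_pos one_lt_two hn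
  have hpow : (2 : ℝ) ^ (L - 1) ≤ n := by
    exact_mod_cast (Nat.pow_pred_clog_lt_self one_lt_two hn).le
  have hlog : ((L : ℝ) - 1) * Real.log 2 ≤ Real.log n := by
    have := Real.log_le_log (by positivity) hpow
    rwa [Real.log_pow, Nat.cast_sub hL, Nat.cast_one] at this
  have hlog2 : Real.log 2 ≤ Real.log n := Real.log_le_log two_pos (by exact_mod_cast hn)
  have hL0 : (0 : ℝ) ≤ L := L.cast_nonneg
  nlinarith [Real.log_two_gt_d9, mul_le_mul_of_nonneg_left Real.log_two_gt_d9.le hL0]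

-- The union bound over at most `n² L` triples `(u, v, j)`; `64` is chosen so that
-- `8 (17/9)^64 < 2^63`.
theorem mul_mul_mul_pow_lt_two_pow {n L : ℕ} (hL : 1 ≤ L) (hn : n ≤ 2 ^ L) :
    (n * n * L : ℝ) * (2 - 1 / 9) ^ (64 * L) < 2 ^ (64 * L - L) := by
  have hn' : (n : ℝ) ≤ 2 ^ L := by exact_mod_cast hn
  have hL' : (L : ℝ) ≤ 2 ^ L := by exact_mod_cast Nat.lt_two_pow_self.le
  calc (n * n * L : ℝ) * (2 - 1 / 9) ^ (64 * L)
      ≤ 2 ^ L * 2 ^ L * 2 ^ L * (2 - 1 / 9) ^ (64 * L) := by gcongr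
    _ = (2 * 2 * 2 * (2 - 1 / 9) ^ 64) ^ L := by rw [mul_pow, mul_pow, mul_pow, ← pow_mul]
    _ < (2 ^ 63) ^ L := pow_lt_pow_left₀ (by norm_num) (by positivity) (by omega)
    _ = 2 ^ (64 * L - L) := by rw [← pow_mul]; congr 1; omega

section Construction

variable {V : Type*} [MetricSpace V] [Fintype V]

def SeparatesAtScale (L j : ℕ) (u v : V) (σ : V → Fin (2 ^ L)) : Prop :=
  Separates (sampleSet (2 ^ (L - (j + 1))) σ) u v
      (pairRadius u v (2 ^ (j + 1))) (pairRadius u v (2 ^ j)) ∨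
    Separates (sampleSet (2 ^ (L - (j + 1))) σ) v u
      (pairRadius u v (2 ^ (j + 1))) (pairRadius u v (2 ^ j))

open Classical in
theorem le_card_separatesAtScale {L j : ℕ} {u v : V} (huv : u ≠ v) (hj : j < L)
    (hrise : pairRadius u v (2 ^ j) < pairRadius u v (2 ^ (j + 1))) :
    ((2 : ℝ) ^ L) ^ Fintype.card V / 9 ≤
      #{σ : V → Fin (2 ^ L) | SeparatesAtScale L j u v σ} := by
  set R := pairRadius u v (2 ^ (j + 1))
  set r := pairRadius u v (2 ^ j)
  have hdisj (x y : V) (hxy : dist x y = dist u v) :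
      Disjoint ({w | dist x w < R} : Finset V) ({w | dist y w ≤ r} : Finset V) := by
    refine disjoint_left.2 fun w hxw hyw => ?_
    simp only [mem_filter, mem_univ, true_and] at hxw hyw
    linarith [dist_triangle_right x y w, pairRadius_le u v (2 ^ j),
      pairRadius_le u v (2 ^ (j + 1)), dist_pos.2 huv]
  obtain ⟨hcard_u, hcard_v⟩ := le_card_of_pairRadius_lt (hrise.trans_le (pairRadius_le u v _))
  rcases card_ball_lt_of_pairRadius_pos ((pairRadius_nonneg u v _).trans_lt hrise)
    with hsmall | hsmall
  · refine (le_card_separating_sampleSet hj (hdisj u v rfl) hsmall hcard_v).trans ?_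
    refine Nat.cast_le.2 (card_le_card fun σ hσ => ?_)
    simp only [mem_filter, mem_univ, true_and] at hσ ⊢
    exact Or.inl hσ
  · refine (le_card_separating_sampleSet hj (hdisj v u (dist_comm v u)) hsmall hcard_u).trans ?_
    refine Nat.cast_le.2 (card_le_card fun σ hσ => ?_)
    simp only [mem_filter, mem_univ, true_and] at hσ ⊢
    exact Or.inr hσ

open Classical in
theorem exists_separating_samples (hn : 2 ≤ Fintype.card V) :
    ∃ ω : Fin (64 * Nat.clog 2 (Fintype.card V)) → V → Fin (2 ^ Nat.clog 2 (Fintype.card V)),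
      ∀ u v : V, u ≠ v → ∀ j < Nat.clog 2 (Fintype.card V),
        pairRadius u v (2 ^ j) < pairRadius u v (2 ^ (j + 1)) →
        Nat.clog 2 (Fintype.card V) ≤
          #{t | SeparatesAtScale (Nat.clog 2 (Fintype.card V)) j u v (ω t)} := by
  set n := Fintype.card V
  set L := Nat.clog 2 n
  have : Nonempty V := Fintype.card_pos_iff.1 (by omega)
  let I : Finset (V × V × Fin L) := {i | i.1 ≠ i.2.1 ∧
    pairRadius i.1 i.2.1 (2 ^ (i.2.2 : ℕ)) < pairRadius i.1 i.2.1 (2 ^ ((i.2.2 : ℕ) + 1))}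
  have hP : ∀ i ∈ I, 1 / 9 * (Fintype.card (V → Fin (2 ^ L)) : ℝ) ≤
      #{σ | SeparatesAtScale L i.2.2 i.1 i.2.1 σ} := fun i hi => by
    obtain ⟨huv, hrise⟩ := (mem_filter.1 hi).2
    rw [Fintype.card_fun, Fintype.card_fin]
    push_cast
    linarith [le_card_separatesAtScale huv i.2.2.isLt hrise]
  have hI : (#I : ℝ) * (2 - 1 / 9) ^ (64 * L) < 2 ^ (64 * L - L) := calc
    (#I : ℝ) * (2 - 1 / 9) ^ (64 * L) ≤ (n * n * L : ℝ) * (2 - 1 / 9) ^ (64 * L) := by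
      gcongr
      exact_mod_cast (card_le_univ I).trans (by simp [n, mul_assoc])
    _ < 2 ^ (64 * L - L) :=
      mul_mul_mul_pow_lt_two_pow (Nat.clog_pos one_lt_two hn) (Nat.le_pow_clog one_lt_two n)
  obtain ⟨ω, hω⟩ := exists_forall_le_card_filter I _ hP hI
  exact ⟨ω, fun u v huv j hj hrise => hω (u, v, ⟨j, hj⟩) (mem_filter.2 ⟨mem_univ _, huv, hrise⟩)⟩

theorem SeparatesAtScale.le_abs_anchorSetDist_sub {L m : ℕ} {ω : Fin m → V → Fin (2 ^ L)}
    {j : Fin L} {t : Fin m} {u v : V} (h : SeparatesAtScale L j u v (ω t))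
    (hS : (anchorFamily ω (j, t)).Nonempty) :
    pairRadius u v (2 ^ ((j : ℕ) + 1)) - pairRadius u v (2 ^ (j : ℕ)) ≤
      |anchorSetDist u (anchorFamily ω (j, t)) hS -
        anchorSetDist v (anchorFamily ω (j, t)) hS| := by
  have heq : anchorFamily ω (j, t) = sampleSet (2 ^ (L - (j + 1))) (ω t) :=
    if_pos (h.elim Separates.nonempty Separates.nonempty)
  rcases h with h | h
  · exact ((heq ▸ h).sub_le_anchorSetDist_sub hS).trans (le_abs_self _)
  · rw [abs_sub_comm]
    exact ((heq ▸ h).sub_le_anchorSetDist_sub hS).trans (le_abs_self _)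

open Classical in
theorem mul_dist_le_sum_anchorFamily [Nonempty V] {L m : ℕ} (hL : Fintype.card V ≤ 2 ^ L)
    (ω : Fin m → V → Fin (2 ^ L))
    (hω : ∀ u v : V, u ≠ v → ∀ j < L, pairRadius u v (2 ^ j) < pairRadius u v (2 ^ (j + 1)) →
      L ≤ #{t | SeparatesAtScale L j u v (ω t)})
    (u v : V) :
    L * (dist u v / 3) ≤ ∑ p, |anchorSetDist u (anchorFamily ω p) (anchorFamily_nonempty ω p) -
      anchorSetDist v (anchorFamily ω p) (anchorFamily_nonempty ω p)| := by
  set gap : Fin L × Fin m → ℝ := fun p => |anchorSetDist u (anchorFamily ω p)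
    (anchorFamily_nonempty ω p) - anchorSetDist v (anchorFamily ω p) (anchorFamily_nonempty ω p)|
  rcases eq_or_ne u v with rfl | huv
  · rw [dist_self, zero_div, mul_zero]
    exact sum_nonneg fun p _ => abs_nonneg _
  set ρ : ℕ → ℝ := fun j => pairRadius u v (2 ^ j)
  have hscale (j : Fin L) : L * (ρ (j + 1) - ρ j) ≤ ∑ t, gap (j, t) := by
    rcases (pairRadius_mono u v (Nat.pow_le_pow_right two_pos (Nat.le_add_right j.val 1))).eq_or_lt
      with heq | hrise
    · simp only [ρ]
      rw [heq, sub_self, mul_zero]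
      exact sum_nonneg fun t _ => abs_nonneg _
    calc L * (ρ (j + 1) - ρ j)
        ≤ #{t | SeparatesAtScale L j u v (ω t)} * (ρ (j + 1) - ρ j) := by
          exact mul_le_mul_of_nonneg_right (by exact_mod_cast hω u v huv j j.isLt hrise)
            (sub_nonneg.2 hrise.le)
      _ ≤ ∑ t with SeparatesAtScale L j u v (ω t), gap (j, t) := by
          rw [← nsmul_eq_mul]
          exact card_nsmul_le_sum _ _ _ fun t ht => (mem_filter.1 ht).2.le_abs_anchorSetDist_sub _
      _ ≤ ∑ t, gap (j, t) := sum_le_sum_of_subset_of_nonneg (filter_subset _ _)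
          fun t _ _ => abs_nonneg _
  calc L * (dist u v / 3) = ∑ j : Fin L, L * (ρ (j + 1) - ρ j) := by
        rw [← mul_sum, Fin.sum_univ_eq_sum_range (fun j => ρ (j + 1) - ρ j), sum_range_sub]
        simp only [ρ, pow_zero, pairRadius_one, pairRadius_eq_of_card_le huv hL, sub_zero]
    _ ≤ ∑ j : Fin L, ∑ t, gap (j, t) := sum_le_sum fun j _ => hscale j
    _ = ∑ p, gap p := (Fintype.sum_prod_type gap).symm

theorem exists_anchorSets (hn : 2 ≤ Fintype.card V) :
    ∃ (S : Fin (Nat.clog 2 (Fintype.card V) * (64 * Nat.clog 2 (Fintype.card V))) → Finset V)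
      (hS : ∀ i, (S i).Nonempty), ∀ u v : V,
        Nat.clog 2 (Fintype.card V) * (dist u v / 3) ≤
          ∑ i, |anchorSetDist u (S i) (hS i) - anchorSetDist v (S i) (hS i)| := by
  have : Nonempty V := Fintype.card_pos_iff.1 (by omega)
  obtain ⟨ω, hω⟩ := exists_separating_samples hn
  refine ⟨fun i => anchorFamily ω (finProdFinEquiv.symm i),
    fun i => anchorFamily_nonempty ω _, fun u v => ?_⟩
  rw [finProdFinEquiv.symm.sum_comp (fun p => |anchorSetDist u (anchorFamily ω p)
    (anchorFamily_nonempty ω p) - anchorSetDist v (anchorFamily ω p) (anchorFamily_nonempty ω p)|)]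
  exact mul_dist_le_sum_anchorFamily (Nat.le_pow_clog one_lt_two _) ω hω u v

end Construction

end Bourgain

/-- **Constructive form of Bourgain's theorem via anchor-sets (deterministic
existence).** There exist absolute constants `c > 0` and `C > 0` such that for
every finite metric space `(V, d)` with `|V| = n ≥ 2` there are `k ≤ c · (log n)²`
nonempty anchor-sets `S₁, …, S_k ⊆ V` for which the Fréchet-type map
`f(v)ᵢ = d(v, Sᵢ) / k` satisfies, for all `u, v`,
`(1 / (C * log n)) * d(u, v) ≤ ‖f u - f v‖₁ ≤ d(u, v)`. -/
theorem bourgain_anchor_sets :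
    ∃ c C : ℝ, 0 < c ∧ 0 < C ∧
      ∀ (V : Type) [MetricSpace V] [Fintype V],
        2 ≤ Fintype.card V →
        ∃ (k : ℕ) (S : Fin k → Finset V) (hS : ∀ i, (S i).Nonempty),
          (k : ℝ) ≤ c * (Real.log (Fintype.card V)) ^ 2 ∧
          ∀ u v : V,
            (1 / (C * Real.log (Fintype.card V))) * dist u v ≤
                ∑ i, |anchorSetDist u (S i) (hS i) / k - anchorSetDist v (S i) (hS i) / k| ∧
            ∑ i, |anchorSetDist u (S i) (hS i) / k - anchorSetDist v (S i) (hS i) / k| ≤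
              dist u v := by
  -- `k = 64 L²` sets and `L ≤ 3 log n` give `c = 64 · 9` and `C = 3 · 192`.
  refine ⟨576, 576, by norm_num, by norm_num, fun V _ _ hn => ?_⟩
  set L := Nat.clog 2 (Fintype.card V)
  obtain ⟨S, hS, hlower⟩ := Bourgain.exists_anchorSets hn
  have hL : (L : ℝ) ≤ 3 * Real.log (Fintype.card V) := Bourgain.clog_two_le_three_mul_log hn
  have hL1 : (1 : ℝ) ≤ L := by exact_mod_cast Nat.clog_pos one_lt_two hn
  have hlog : 0 < Real.log (Fintype.card V) := Real.log_pos (by exact_mod_cast hn)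
  refine ⟨L * (64 * L), S, hS, by push_cast; nlinarith, fun u v =>
    ⟨?_, Bourgain.sum_abs_anchorSetDist_div_sub_le S hS u v⟩⟩
  simp_rw [← sub_div, abs_div, Nat.abs_cast, ← sum_div]
  calc 1 / (576 * Real.log (Fintype.card V)) * dist u v
      ≤ L * (dist u v / 3) / ((L * (64 * L) : ℕ) : ℝ) := by
        rw [div_mul_eq_mul_div, one_mul, div_le_div_iff₀ (by positivity) (by push_cast; nlinarith)]
        push_cast
        nlinarith [mul_le_mul_of_nonneg_left hL (by positivity : (0 : ℝ) ≤ 64 * L * dist u v)]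
    _ ≤ _ := by gcongr; exact hlower u v
end

section
/- Let G be a finite connected simple graph with vertex set V, let q ≥ 1 be a natural number, and let φ : V → C be the map sending each vertex v to the rooted-isomorphism class of its q-hop neighbourhood graph (the subgraph of G induced on the closed ball of radius q around v, rooted at v). Then the following are equivalent: (1) there exists a function h : C × C → ℕ such that for all u, v ∈ V, the shortest-path distance d_sp(u, v) in G equals h(φ(u), φ(v)); (2) no two distinct vertices u ≠ v of G have rooted-isomorphic q-hop neighbourhood graphs, i.e., φ is injective. -/
/-- Two vertices `u, v` of a simple graph `G` have *rooted-isomorphic `q`-hop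
neighbourhood graphs* if there is a graph isomorphism between the subgraphs of `G`
induced on the closed balls of radius `q` (w.r.t. the shortest-path distance)
around `u` and around `v` that maps the root `u` to the root `v`. -/
def rootedIso {V : Type} (G : SimpleGraph V) (q : ℕ) (u v : V) : Prop :=
  ∃ e : (G.induce {w | G.dist u w ≤ q}) ≃g (G.induce {w | G.dist v w ≤ q}),
    e ⟨u, by simp [SimpleGraph.dist_self]⟩ = ⟨v, by simp [SimpleGraph.dist_self]⟩

/-- Rooted isomorphism of `q`-hop neighbourhood graphs is an equivalence relation
on the vertices of `G`; its quotient is the set `C` of rooted-isomorphism classes. -/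
def rootedSetoid {V : Type} (G : SimpleGraph V) (q : ℕ) : Setoid V where
  r := rootedIso G q
  iseqv := by
    constructor
    · intro x
      exact ⟨(SimpleGraph.Iso.refl : G.induce {w | G.dist x w ≤ q} ≃g _), rfl⟩
    · rintro x y ⟨e, he⟩
      exact ⟨e.symm, by rw [← he]; exact e.symm_apply_apply _⟩
    · rintro x y z ⟨e, he⟩ ⟨f, hf⟩
      exact ⟨e.trans f, by rw [RelIso.trans_apply, he, hf]⟩

theorem SimpleGraph.Connected.injective_of_dist_eq {V α : Type*} {G : SimpleGraph V}
    (hG : G.Connected) (f : V → α) (h : α × α → ℕ)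
    (hdist : ∀ u v, G.dist u v = h (f u, f v)) : Function.Injective f := by
  intro u v huv
  have hzero : G.dist u v = 0 := by
    rw [hdist, huv, ← hdist, SimpleGraph.dist_self]
  exact (hG u v).dist_eq_zero_iff.mp hzero

theorem structure_aware_iff_injective_general {V : Type}
    (G : SimpleGraph V) (hG : G.Connected) (q : ℕ) :
    (∃ h : Quotient (rootedSetoid G q) × Quotient (rootedSetoid G q) → ℕ,
        ∀ u v : V,
          G.dist u v =
            h (Quotient.mk (rootedSetoid G q) u, Quotient.mk (rootedSetoid G q) v)) ↔
      Function.Injective (Quotient.mk (rootedSetoid G q)) := by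
  refine ⟨fun ⟨h, hdist⟩ => hG.injective_of_dist_eq _ h hdist, fun hinj => ?_⟩
  refine ⟨Function.extend (Prod.map (Quotient.mk _) (Quotient.mk _))
    (fun p => G.dist p.1 p.2) 0, fun u v => ?_⟩
  exact ((hinj.prodMap hinj).extend_apply (fun p => G.dist p.1 p.2) 0 (u, v)).symm

/-- **Proposition 1 (structure-aware vs. position-aware embeddings).**
Let `G` be a finite connected simple graph, `q ≥ 1`, and let
`φ : V → C := Quotient.mk (rootedSetoid G q)` send each vertex to the
rooted-isomorphism class of its `q`-hop neighbourhood graph.  Then the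
shortest-path distance can be recovered from the classes (i.e. there is
`h : C × C → ℕ` with `d_sp(u, v) = h (φ u, φ v)` for all `u, v`) if and only if
no two distinct vertices have rooted-isomorphic `q`-hop neighbourhood graphs,
i.e. `φ` is injective. -/
theorem structure_aware_iff_injective {V : Type} [Fintype V]
    (G : SimpleGraph V) (hG : G.Connected) (q : ℕ) (hq : 1 ≤ q) :
    (∃ h : Quotient (rootedSetoid G q) × Quotient (rootedSetoid G q) → ℕ,
        ∀ u v : V,
          G.dist u v =
            h (Quotient.mk (rootedSetoid G q) u, Quotient.mk (rootedSetoid G q) v)) ↔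
      Function.Injective (Quotient.mk (rootedSetoid G q)) :=
  structure_aware_iff_injective_general G hG q
end
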